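/- A quantum operation E is translationally covariant with respect to L if and only if it commutes with every mode projector: E ∘ P^(ω) = P^(ω) ∘ E for all ω ∈ Ω (where we also set P^(ω)∘E and E∘P^(ω) matching mode decompositions between input and output). Equivalently, whenever E(ρ) = σ, then E(P^(ω)(ρ)) = P^(ω)(σ) for all ω. -/

import Mathlib

open Matrix

/-- The observable `L = Σ_l λ_l Π_l` built from spectral projectors. -/
noncomputable def Lof {n k : ℕ} (Pr : Fin k → Matrix (Fin n) (Fin n) ℂ)
    (lam : Fin k → ℝ) : Matrix (Fin n) (Fin n) ℂ :=
  ∑ l, (lam l : ℂ) • Pr l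

/-- The mode-`ω` projector `P^(ω)(A) = Σ_{λ_{l'} − λ_l = ω} Π_l A Π_{l'}`. -/
noncomputable def Pmode {n k : ℕ} (Pr : Fin k → Matrix (Fin n) (Fin n) ℂ)
    (lam : Fin k → ℝ) (ω : ℝ) (A : Matrix (Fin n) (Fin n) ℂ) :
    Matrix (Fin n) (Fin n) ℂ :=
  ∑ l, ∑ l', if lam l' - lam l = ω then Pr l * A * Pr l' else 0

/-!
With `L = ∑ λₗ Πₗ` for a complete family of orthogonal projections `Πₗ`, the functional calculus
gives `e^{-ixL} A e^{ixL} = ∑_{l,l'} e^{ix(λ_{l'} - λₗ)} Πₗ A Π_{l'} = ∑_{ω ∈ Ω} e^{ixω} P^(ω)(A)`,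
with `Ω` the finite set of differences of eigenvalues. Hence `U_x ∘ E - E ∘ U_x` is the
trigonometric polynomial `∑_{ω ∈ Ω} e^{ixω} (P^(ω) ∘ E - E ∘ P^(ω))` in `x`, and since distinct
characters `x ↦ e^{ixω}` are linearly independent it vanishes identically iff every coefficient
does. For `ω ∉ Ω` both sides of `E ∘ P^(ω) = P^(ω) ∘ E` vanish.
-/

open Finset

section OrthogonalIdempotents

variable {R A ι : Type*} [CommSemiring R] [Semiring A] [Algebra R A] [Fintype ι] {e : ι → A}

variable (R) in
def CompleteOrthogonalIdempotents.sumSMulAlgHom (he : CompleteOrthogonalIdempotents e) :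
    (ι → R) →ₐ[R] A where
  toFun v := ∑ i, v i • e i
  map_one' := by simp [he.complete]
  map_mul' v w := by
    classical
    simp [sum_mul, mul_sum, he.mul_eq, smul_smul, mul_comm]
  map_zero' := by simp
  map_add' v w := by simp [add_smul, sum_add_distrib]
  commutes' c := by simp [Algebra.algebraMap_eq_smul_one, ← smul_sum, he.complete]

theorem CompleteOrthogonalIdempotents.exp_sum_smul {A : Type*} [NormedRing A] [NormedAlgebra ℂ A]
    [CompleteSpace A] {e : ι → A} (he : CompleteOrthogonalIdempotents e) (c : ι → ℂ) :
    NormedSpace.exp (∑ i, c i • e i) = ∑ i, Complex.exp (c i) • e i := by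
  let := NormedAlgebra.restrictScalars ℚ ℂ A
  have := NormedSpace.map_exp (he.sumSMulAlgHom ℂ)
    (LinearMap.continuous_of_finiteDimensional (he.sumSMulAlgHom ℂ).toLinearMap) c
  simpa [sumSMulAlgHom, Pi.exp_def, Complex.exp_eq_exp_ℂ] using this.symm

end OrthogonalIdempotents

open Complex

noncomputable def expMulIChar (ω : ℝ) : Multiplicative ℝ →* ℂ where
  toFun x := exp (I * x.toAdd * ω)
  map_one' := by simp
  map_mul' a b := by
    simp only [toAdd_mul, ofReal_add, ← Complex.exp_add]
    ring_nf

theorem expMulIChar_injective : Function.Injective expMulIChar := by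
  intro ω ω' h
  by_contra hne
  have hd : (ω - ω' : ℂ) ≠ 0 := by exact_mod_cast sub_ne_zero.2 hne
  have hx := DFunLike.congr_fun h (Multiplicative.ofAdd (Real.pi / (ω - ω')))
  -- at `x = π / (ω - ω')` the two characters differ by the factor `e^{iπ} = -1`
  have hshift :
      I * ↑(Real.pi / (ω - ω')) * ω = I * ↑(Real.pi / (ω - ω')) * ω' + Real.pi * I := by
    push_cast; field_simp; ring
  simp only [expMulIChar, MonoidHom.coe_mk, OneHom.coe_mk, toAdd_ofAdd, hshift, Complex.exp_add,
    exp_pi_mul_I] at hx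
  exact exp_ne_zero _ (by linear_combination -hx / 2)

theorem eq_zero_of_forall_sum_exp_smul_eq_zero {V : Type*} [AddCommGroup V] [Module ℂ V]
    {s : Finset ℝ} {v : ℝ → V} (h : ∀ x : ℝ, ∑ ω ∈ s, exp (I * x * ω) • v ω = 0) {ω : ℝ}
    (hω : ω ∈ s) : v ω = 0 := by
  have hli : LinearIndependent ℂ (fun ω => ⇑(expMulIChar ω)) :=
    (linearIndependent_monoidHom (Multiplicative ℝ) ℂ).comp _ expMulIChar_injective
  refine (Module.forall_dual_apply_eq_zero_iff ℂ (v ω)).1 fun f => ?_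
  refine linearIndependent_iff'.1 hli s (fun ω => f (v ω)) (funext fun x => ?_) ω hω
  simpa [expMulIChar, Finset.sum_apply, mul_comm] using congrArg f (h x.toAdd)

theorem forall_commute_iff_of_eq_sum_exp_smul {V : Type*} [AddCommGroup V] [Module ℂ V]
    {s : Finset ℝ} {U P : ℝ → V → V}
    (hU : ∀ x v, U x v = ∑ ω ∈ s, exp (I * x * ω) • P ω v) (E : V →ₗ[ℂ] V) :
    (∀ x v, U x (E v) = E (U x v)) ↔ ∀ ω ∈ s, ∀ v, P ω (E v) = E (P ω v) := by
  have hdiff : ∀ x v, U x (E v) - E (U x v) =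
      ∑ ω ∈ s, exp (I * x * ω) • (P ω (E v) - E (P ω v)) := by
    intro x v
    simp [hU, map_sum, map_smul, smul_sub, sum_sub_distrib]
  refine ⟨fun h ω hω v => sub_eq_zero.1 ?_, fun h x v => sub_eq_zero.1 ?_⟩
  · exact eq_zero_of_forall_sum_exp_smul_eq_zero (fun x => by rw [← hdiff, h, sub_self]) hω
  · rw [hdiff]
    exact sum_eq_zero fun ω hω => by rw [h ω hω, sub_self, smul_zero]

section Modes

variable {n k : ℕ} (Pr : Fin k → Matrix (Fin n) (Fin n) ℂ) (lam : Fin k → ℝ)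

noncomputable def modeSet : Finset ℝ := image (fun p : Fin k × Fin k => lam p.2 - lam p.1) univ

theorem sub_mem_modeSet (l l' : Fin k) : lam l' - lam l ∈ modeSet lam :=
  mem_image.2 ⟨(l, l'), mem_univ _, rfl⟩

theorem Pmode_eq_zero_of_notMem {ω : ℝ} (hω : ω ∉ modeSet lam) (A : Matrix (Fin n) (Fin n) ℂ) :
    Pmode Pr lam ω A = 0 :=
  sum_eq_zero fun l _ => sum_eq_zero fun l' _ =>
    if_neg fun h : lam l' - lam l = ω => hω (h ▸ sub_mem_modeSet lam l l')

theorem sum_smul_Pmode (g : ℝ → ℂ) (A : Matrix (Fin n) (Fin n) ℂ) :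
    ∑ ω ∈ modeSet lam, g ω • Pmode Pr lam ω A =
      ∑ l, ∑ l', g (lam l' - lam l) • (Pr l * A * Pr l') := by
  simp_rw [Pmode, smul_sum, smul_ite, smul_zero]
  rw [sum_comm]
  refine sum_congr rfl fun l _ => ?_
  rw [sum_comm]
  refine sum_congr rfl fun l' _ => ?_
  rw [sum_ite_eq (modeSet lam) (lam l' - lam l), if_pos (sub_mem_modeSet lam l l')]

-- `NormedSpace.exp` depends only on the topology, so any norm inducing it may be used.
attribute [local instance] Matrix.linftyOpNormedRing Matrix.linftyOpNormedAlgebra in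
theorem exp_smul_Lof (hPr : CompleteOrthogonalIdempotents Pr) (c : ℂ) :
    NormedSpace.exp (c • Lof Pr lam) = ∑ l, exp (c * lam l) • Pr l := by
  rw [Lof, smul_sum]
  simp_rw [smul_smul]
  exact hPr.exp_sum_smul _

theorem exp_conj_eq_sum_smul_Pmode (hPr : CompleteOrthogonalIdempotents Pr) (x : ℝ)
    (A : Matrix (Fin n) (Fin n) ℂ) :
    NormedSpace.exp ((-(I * (x : ℂ))) • Lof Pr lam) * A *
        NormedSpace.exp ((I * (x : ℂ)) • Lof Pr lam) =
      ∑ ω ∈ modeSet lam, exp (I * x * ω) • Pmode Pr lam ω A := by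
  rw [exp_smul_Lof Pr lam hPr, exp_smul_Lof Pr lam hPr, sum_smul_Pmode, sum_mul, sum_mul]
  refine sum_congr rfl fun l _ => ?_
  simp_rw [mul_sum, smul_mul_assoc, mul_smul_comm, smul_smul, ← Complex.exp_add]
  refine sum_congr rfl fun l' _ => ?_
  congr 2
  push_cast
  ring

end Modes

theorem translationCovariant_iff_preserves_modes_general {n k : ℕ}
    (Pr : Fin k → Matrix (Fin n) (Fin n) ℂ)
    (horth : ∀ l l', Pr l * Pr l' = if l = l' then Pr l else 0)
    (hsum : ∑ l, Pr l = 1)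
    (lam : Fin k → ℝ)
    (E : Matrix (Fin n) (Fin n) ℂ →ₗ[ℂ] Matrix (Fin n) (Fin n) ℂ) :
    (∀ (x : ℝ) (A : Matrix (Fin n) (Fin n) ℂ),
      NormedSpace.exp ((-(Complex.I * (x : ℂ))) • Lof Pr lam) * E A *
          NormedSpace.exp ((Complex.I * (x : ℂ)) • Lof Pr lam) =
        E (NormedSpace.exp ((-(Complex.I * (x : ℂ))) • Lof Pr lam) * A *
            NormedSpace.exp ((Complex.I * (x : ℂ)) • Lof Pr lam))) ↔
    (∀ (ω : ℝ) (A : Matrix (Fin n) (Fin n) ℂ),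
      E (Pmode Pr lam ω A) = Pmode Pr lam ω (E A)) := by
  have hPr : CompleteOrthogonalIdempotents Pr := ⟨OrthogonalIdempotents.iff_mul_eq.2 horth, hsum⟩
  rw [forall_commute_iff_of_eq_sum_exp_smul (exp_conj_eq_sum_smul_Pmode Pr lam hPr) E]
  refine forall_congr' fun ω => ⟨fun h A => ?_, fun h _ A => (h A).symm⟩
  by_cases hω : ω ∈ modeSet lam
  · exact (h hω A).symm
  · simp only [Pmode_eq_zero_of_notMem Pr lam hω, map_zero]

/-- A linear map `E` is translationally covariant with respect to `L` if and only if it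
commutes with every mode projector: `E ∘ P^(ω) = P^(ω) ∘ E` for all `ω`; equivalently,
the mode-`ω` component of the input is mapped to the mode-`ω` component of the output. -/
theorem translationCovariant_iff_preserves_modes {n k : ℕ}
    (Pr : Fin k → Matrix (Fin n) (Fin n) ℂ)
    (hherm : ∀ l, (Pr l).IsHermitian)
    (horth : ∀ l l', Pr l * Pr l' = if l = l' then Pr l else 0)
    (hsum : ∑ l, Pr l = 1)
    (lam : Fin k → ℝ) (hdist : Function.Injective lam)
    (E : Matrix (Fin n) (Fin n) ℂ →ₗ[ℂ] Matrix (Fin n) (Fin n) ℂ) :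
    (∀ (x : ℝ) (A : Matrix (Fin n) (Fin n) ℂ),
      NormedSpace.exp ((-(Complex.I * (x : ℂ))) • Lof Pr lam) * E A *
          NormedSpace.exp ((Complex.I * (x : ℂ)) • Lof Pr lam) =
        E (NormedSpace.exp ((-(Complex.I * (x : ℂ))) • Lof Pr lam) * A *
            NormedSpace.exp ((Complex.I * (x : ℂ)) • Lof Pr lam))) ↔
    (∀ (ω : ℝ) (A : Matrix (Fin n) (Fin n) ℂ),
      E (Pmode Pr lam ω A) = Pmode Pr lam ω (E A)) :=
  translationCovariant_iff_preserves_modes_general Pr horth hsum lam E
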